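/- Let n ∈ ℕ, α ∈ (0,1), γ₂ > 0, γ₃ ∈ ℝ and Č > 0. Set a_n = ⌊(1−α)n − n^{1−γ₂}⌋ and â_n = ⌊a_n − n^{1−γ₂}⌋, and assume 1 ≤ â_n ≤ n. On a probability space (Ω, F, P), let (W_j)_{j=1}^n be independent random variables each distributed according to the standard normal law N(0,1), and let (U_j)_{j=1}^n be arbitrary real random variables. Define Ĵ_n = {j : r_n(|W_j|) ≤ â_n}, J̃_n = {j : |W_j| ≤ c(α)^{1/2}}, the event Ω̃_n = {| |W|_{(â_n)} − c(α)^{1/2} | < Č·n^{−γ₂}}, the events B_j = {| |W_j| − c(α)^{1/2} | < Č·n^{−γ₂}}, and D̃_n = n^{γ₃} | n^{−1} Σ_{j∈Ĵ_n} U_j − n^{−1} Σ_{j∈J̃_n} U_j |. Then for all p₁ > p ≥ 1: ‖D̃_n‖_p ≤ n^{γ₃} ‖max_{j≤n}|U_j|‖_p · P[B_1] + n^{γ₃} ‖max_{j≤n}|U_j|‖_{p p₁ (p₁−p)^{−1}} · ‖ n^{−1} Σ_{j=1}^n ( 1_{B_j} − P[B_j] ) ‖_{p₁} + n^{γ₃}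 P[Ω̃_n^c]^{1/p₁} ‖max_{j≤n}|U_j|‖_{p p₁ (p₁−p)^{−1}}. -/

import Mathlib

/-!
On the almost sure event where the `|W_j|` are pairwise distinct, selecting the indices of rank
at most `â_n` is the same as thresholding at the order statistic `|W|_(â_n)`. When that order
statistic lies within `ε = Č n^{-γ₂}` of `√c`, the index sets `Ĵ_n` and `J̃_n` can differ only at
indices `j` with `ω ∈ B_j`, so `|D̃_n| ≤ n^{γ₃} max_j |U_j| · #{j : ω ∈ B_j} / n`, and
`#{j : ω ∈ B_j} / n = P[B_1] + S` with `S` the centred average of the indicators of the `B_j`.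
Off that event the trivial bound `|D̃_n| ≤ n^{γ₃} max_j |U_j|` holds. Hence pointwise
`|D̃_n| ≤ n^{γ₃} max_j |U_j| (P[B_1] + |S| + 1_{Ω̃_nᶜ})`, and Minkowski's inequality followed
by Hölder's inequality with `1/p = 1/q + 1/p₁`, `q = p p₁ / (p₁ - p)`, yields the three terms.
-/

open MeasureTheory ProbabilityTheory Filter Finset
open scoped ENNReal

/-- Rank of `x k` within the family `(x k')_{k' ∈ s}`. -/
noncomputable def rankIn (s : Finset ℕ) (x : ℕ → ℝ) (k : ℕ) : ℕ :=
  (s.filter fun k' => x k' ≤ x k).card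

/-- The `r`-th order statistic (the `r`-th smallest value) of the family `(x k)_{k ∈ s}`.
For a family with pairwise distinct values, this is the unique value of rank `r`. -/
noncomputable def orderStatIn (s : Finset ℕ) (x : ℕ → ℝ) (r : ℕ) : ℝ :=
  if h : ∃ k, k ∈ s ∧ rankIn s x k = r then x h.choose else 0

section Rank

variable {s : Finset ℕ} {x : ℕ → ℝ} {j k r : ℕ}

lemma rankIn_mono (h : x j ≤ x k) : rankIn s x j ≤ rankIn s x k :=
  card_le_card fun _ hi => mem_filter.2 ⟨(mem_filter.1 hi).1, (mem_filter.1 hi).2.trans h⟩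

lemma rankIn_lt_rankIn (hk : k ∈ s) (h : x j < x k) : rankIn s x j < rankIn s x k := by
  have hsub : (s.filter fun i => x i ≤ x j) ⊆ s.filter fun i => x i ≤ x k :=
    fun _ hi => mem_filter.2 ⟨(mem_filter.1 hi).1, (mem_filter.1 hi).2.trans h.le⟩
  refine card_lt_card <| (ssubset_iff_of_subset hsub).2 ⟨k, mem_filter.2 ⟨hk, le_rfl⟩, ?_⟩
  exact fun hk' => (mem_filter.1 hk').2.not_gt h

lemma rankIn_mem_Icc (hj : j ∈ s) : rankIn s x j ∈ Icc 1 #s :=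
  mem_Icc.2 ⟨card_pos.2 ⟨j, mem_filter.2 ⟨hj, le_rfl⟩⟩, card_filter_le _ _⟩

lemma rankIn_injOn (hx : Set.InjOn x s) : Set.InjOn (rankIn s x) s := by
  intro j hj k hk h
  rcases lt_trichotomy (x j) (x k) with hlt | heq | hgt
  · exact absurd h (rankIn_lt_rankIn hk hlt).ne
  · exact hx hj hk heq
  · exact absurd h (rankIn_lt_rankIn hj hgt).ne'

lemma exists_rankIn_eq (hx : Set.InjOn x s) (hr : r ∈ Icc 1 #s) : ∃ k ∈ s, rankIn s x k = r := by
  obtain ⟨k, hk, rfl⟩ := surj_on_of_inj_on_of_card_le (fun k _ => rankIn s x k)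
    (fun _ => rankIn_mem_Icc) (fun _ _ hj hk => rankIn_injOn hx hj hk) (by simp) r hr
  exact ⟨k, hk, rfl⟩

lemma orderStatIn_rankIn (hx : Set.InjOn x s) (hk : k ∈ s) :
    orderStatIn s x (rankIn s x k) = x k := by
  have h : ∃ i, i ∈ s ∧ rankIn s x i = rankIn s x k := ⟨k, hk, rfl⟩
  rw [orderStatIn, dif_pos h, rankIn_injOn hx h.choose_spec.1 hk h.choose_spec.2]

lemma rankIn_le_iff_le_orderStatIn (hx : Set.InjOn x s) (hr : r ∈ Icc 1 #s) (hj : j ∈ s) :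
    rankIn s x j ≤ r ↔ x j ≤ orderStatIn s x r := by
  obtain ⟨k, hk, rfl⟩ := exists_rankIn_eq hx hr
  rw [orderStatIn_rankIn hx hk]
  exact ⟨fun h => not_lt.1 fun hlt => (rankIn_lt_rankIn hj hlt).not_ge h, rankIn_mono⟩

lemma filter_rankIn_symmDiff_filter_subset (hx : Set.InjOn x s) (hr : r ∈ Icc 1 #s) {t ε : ℝ}
    (hε : |orderStatIn s x r - t| < ε) :
    symmDiff (s.filter fun j => rankIn s x j ≤ r) (s.filter fun j => x j ≤ t) ⊆
      s.filter fun j => |x j - t| < ε := by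
  intro j hj
  simp only [mem_symmDiff, mem_filter] at hj
  have hε' := abs_lt.1 hε
  rcases hj with ⟨⟨hj, hrank⟩, hthr⟩ | ⟨⟨hj, hthr⟩, hrank⟩
  · have := (rankIn_le_iff_le_orderStatIn hx hr hj).1 hrank
    simp only [hj, true_and, not_le] at hthr
    refine mem_filter.2 ⟨hj, abs_lt.2 ⟨?_, ?_⟩⟩ <;> linarith
  · have := (rankIn_le_iff_le_orderStatIn hx hr hj).not.1 (fun h => hrank ⟨hj, h⟩)
    refine mem_filter.2 ⟨hj, abs_lt.2 ⟨?_, ?_⟩⟩ <;> linarith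

end Rank

lemma abs_sum_sub_sum_le_card_symmDiff_mul {ι : Type*} [DecidableEq ι] {A B : Finset ι}
    {u : ι → ℝ} {M : ℝ} (hM : ∀ j ∈ symmDiff A B, |u j| ≤ M) :
    |∑ j ∈ A, u j - ∑ j ∈ B, u j| ≤ #(symmDiff A B) * M := by
  rw [← sum_sdiff_sub_sum_sdiff]
  calc |∑ j ∈ A \ B, u j - ∑ j ∈ B \ A, u j|
      ≤ ∑ j ∈ A \ B, |u j| + ∑ j ∈ B \ A, |u j| :=
        (abs_sub _ _).trans (add_le_add (abs_sum_le_sum_abs _ _) (abs_sum_le_sum_abs _ _))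
    _ = ∑ j ∈ symmDiff A B, |u j| := by
        rw [symmDiff_def, sup_eq_union, sum_union disjoint_sdiff_sdiff]
    _ ≤ #(symmDiff A B) * M := by
        simpa using sum_le_card_nsmul _ _ _ hM

lemma abs_le_biSup_abs {ι : Type*} {s : Finset ι} (u : ι → ℝ) {j : ι} (hj : j ∈ s) :
    |u j| ≤ ⨆ i ∈ s, |u i| := by
  have hbdd : BddAbove (Set.range fun i => ⨆ _ : i ∈ s, |u i|) := by
    refine ⟨∑ i ∈ s, |u i|, Set.forall_mem_range.2 fun i => ?_⟩
    by_cases hi : i ∈ s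
    · rw [ciSup_pos hi]
      exact single_le_sum (f := fun i => |u i|) (fun _ _ => abs_nonneg _) hi
    · simp [hi, sum_nonneg]
  exact le_ciSup_of_le hbdd j (ciSup_pos (f := fun _ => |u j|) hj).ge

lemma biSup_abs_nonneg {ι : Type*} (s : Finset ι) (u : ι → ℝ) : 0 ≤ ⨆ i ∈ s, |u i| :=
  Real.iSup_nonneg fun _ => Real.iSup_nonneg fun _ => abs_nonneg _

lemma card_filter_div_card_eq_add_average_sub {ι : Type*} {s : Finset ι} (hs : s.Nonempty)
    (q : ι → Prop) [DecidablePred q] {β : ℝ} {b : ι → ℝ} (hb : ∀ j ∈ s, b j = β) :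
    (#(s.filter q) : ℝ) / #s = β + 1 / (#s : ℝ) * ∑ j ∈ s, ((if q j then 1 else 0) - b j) := by
  have hs' : (#s : ℝ) ≠ 0 := Nat.cast_ne_zero.2 hs.card_pos.ne'
  rw [sum_sub_distrib, sum_boole, sum_congr rfl hb, sum_const, nsmul_eq_mul]
  field_simp
  ring

lemma abs_average_filter_rankIn_sub_average_filter_le {s : Finset ℕ} {x : ℕ → ℝ} {r : ℕ}
    (hx : Set.InjOn x s) (hr : r ∈ Icc 1 #s) (t ε : ℝ) (u : ℕ → ℝ) :
    |1 / (#s : ℝ) * ∑ j ∈ s.filter (fun j => rankIn s x j ≤ r), u j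
        - 1 / (#s : ℝ) * ∑ j ∈ s.filter (fun j => x j ≤ t), u j|
      ≤ (⨆ j ∈ s, |u j|) * (#(s.filter fun j => |x j - t| < ε) / (#s : ℝ)
        + if |orderStatIn s x r - t| < ε then 0 else 1) := by
  set A := s.filter fun j => rankIn s x j ≤ r
  set B := s.filter fun j => x j ≤ t
  set M := ⨆ j ∈ s, |u j|
  have hs : (0 : ℝ) < #s := Nat.cast_pos.2 ((mem_Icc.1 hr).1.trans (mem_Icc.1 hr).2)
  have hABs : symmDiff A B ⊆ s :=
    symmDiff_le_sup.trans (union_subset (filter_subset _ _) (filter_subset _ _))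
  have hM0 : 0 ≤ M := biSup_abs_nonneg s u
  have hcard : (#(symmDiff A B) : ℝ) / #s ≤ #(s.filter fun j => |x j - t| < ε) / (#s : ℝ)
      + if |orderStatIn s x r - t| < ε then 0 else 1 := by
    split_ifs with hε
    · rw [add_zero]
      gcongr
      exact filter_rankIn_symmDiff_filter_subset hx hr hε
    · rw [div_le_iff₀ hs]
      have hAB : (#(symmDiff A B) : ℝ) ≤ #s := by exact_mod_cast card_le_card hABs
      rw [add_mul, one_mul, div_mul_cancel₀ _ hs.ne']
      linarith [(#(s.filter fun j => |x j - t| < ε)).cast_nonneg (α := ℝ)]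
  calc _ = |∑ j ∈ A, u j - ∑ j ∈ B, u j| / #s := by
        rw [← mul_sub, abs_mul, abs_of_pos (by positivity)]; ring
    _ ≤ #(symmDiff A B) * M / #s := by
        gcongr
        exact abs_sum_sub_sum_le_card_symmDiff_mul fun j hj => abs_le_biSup_abs u (hABs hj)
    _ = M * (#(symmDiff A B) / #s) := by ring
    _ ≤ _ := by gcongr

section Independence

variable {Ω : Type*} [MeasurableSpace Ω] {P : Measure Ω} [IsFiniteMeasure P]

lemma measure_abs_eq_abs_eq_zero {X Y : Ω → ℝ} (hX : Measurable X) (hY : Measurable Y)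
    (hXY : IndepFun X Y P) (hYac : P.map Y ≪ volume) : P {ω | |X ω| = |Y ω|} = 0 := by
  have hC : MeasurableSet {z : ℝ × ℝ | |z.1| = |z.2|} :=
    measurableSet_eq_fun measurable_fst.abs measurable_snd.abs
  have hslice (x : ℝ) : P.map Y (Prod.mk x ⁻¹' {z : ℝ × ℝ | |z.1| = |z.2|}) = 0 := by
    refine hYac <| measure_mono_null (t := {x, -x}) (fun y hy => ?_)
      ((Set.toFinite _).measure_zero _)
    exact abs_eq_abs.1 (Eq.symm hy)
  change P ((fun ω => (X ω, Y ω)) ⁻¹' {z : ℝ × ℝ | |z.1| = |z.2|}) = 0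
  rw [← Measure.map_apply (hX.prodMk hY) hC,
    (indepFun_iff_map_prod_eq_prod_map_map hX.aemeasurable hY.aemeasurable).1 hXY,
    Measure.prod_apply hC, lintegral_congr hslice, lintegral_zero]

lemma ae_injective_abs_of_iIndepFun {ι : Type*} [Countable ι] {X : ι → Ω → ℝ}
    (hX : ∀ i, Measurable (X i)) (hind : iIndepFun X P) (hac : ∀ i, P.map (X i) ≪ volume) :
    ∀ᵐ ω ∂P, Function.Injective fun i => |X i ω| := by
  have hpair : ∀ i j, ∀ᵐ ω ∂P, |X i ω| = |X j ω| → i = j := by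
    intro i j
    by_cases hij : i = j
    · exact Eventually.of_forall fun _ _ => hij
    · have := measure_abs_eq_abs_eq_zero (hX i) (hX j) (hind.indepFun hij) (hac j)
      filter_upwards [measure_eq_zero_iff_ae_notMem.1 this] with ω hω h
      exact absurd h hω
  filter_upwards [ae_all_iff.2 fun i => ae_all_iff.2 (hpair i)] with ω hω i j h
  exact hω i j h

lemma ae_injOn_abs_Icc {n : ℕ} {W : ℕ → Ω → ℝ} (hW : ∀ j, Measurable (W j))
    (hind : iIndepFun (fun j : Fin n => W (j.1 + 1)) P)
    (hac : ∀ j ∈ Icc 1 n, P.map (W j) ≪ volume) :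
    ∀ᵐ ω ∂P, Set.InjOn (fun i => |W i ω|) (Icc 1 n) := by
  filter_upwards [ae_injective_abs_of_iIndepFun (fun _ => hW _) hind
    fun j => hac _ (mem_Icc.2 ⟨by omega, j.2⟩)] with ω hω i hi k hk h
  simp only [coe_Icc, Set.mem_Icc] at hi hk
  have := @hω ⟨i - 1, by omega⟩ ⟨k - 1, by omega⟩
    (by simpa [Nat.sub_add_cancel hi.1, Nat.sub_add_cancel hk.1] using h)
  simp only [Fin.mk.injEq] at this
  omega

end Independence

section Holder

variable {Ω : Type*} [MeasurableSpace Ω] {μ : Measure Ω}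

/-- Minkowski's and Hölder's inequalities need measurability, which `f` and `M` may lack; the
measurable minorant `N` of `M` carries the whole `Lᵖ` norm of `f`. -/
lemma exists_measurable_eLpNorm_eq_mul {f M G : Ω → ℝ} (hM : 0 ≤ M) (hG : Measurable G)
    (hfMG : ∀ᵐ ω ∂μ, |f ω| ≤ M ω * G ω) {p : ℝ≥0∞} (hp0 : p ≠ 0) (hp : p ≠ ∞) :
    ∃ N : Ω → ℝ, Measurable N ∧ 0 ≤ N ∧ (∀ᵐ ω ∂μ, N ω ≤ M ω) ∧
      eLpNorm f p μ = eLpNorm (N * G) p μ := by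
  have hp' : 0 < p.toReal := ENNReal.toReal_pos hp0 hp
  obtain ⟨h, hh, hhf, hint⟩ := exists_measurable_le_lintegral_eq μ fun ω => ‖f ω‖ₑ ^ p.toReal
  set g : Ω → ℝ≥0∞ := fun ω => h ω ^ p.toReal⁻¹
  have hgp (ω : Ω) : g ω ^ p.toReal = h ω := ENNReal.rpow_inv_rpow hp'.ne' _
  have hgf (ω : Ω) : g ω ≤ ‖f ω‖ₑ := by
    simpa [ENNReal.rpow_rpow_inv hp'.ne'] using
      ENNReal.rpow_le_rpow (hhf ω) (inv_nonneg.2 hp'.le)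
  have hgMG : ∀ᵐ ω ∂μ, g ω ≤ ENNReal.ofReal (M ω) * ‖G ω‖ₑ := by
    filter_upwards [hfMG] with ω hω
    refine (hgf ω).trans ?_
    rw [Real.enorm_eq_ofReal_abs, Real.enorm_eq_ofReal_abs, ← ENNReal.ofReal_mul (hM ω)]
    exact ENNReal.ofReal_le_ofReal (hω.trans (mul_le_mul_of_nonneg_left (le_abs_self _) (hM ω)))
  refine ⟨fun ω => (g ω / ‖G ω‖ₑ).toReal, by fun_prop, fun ω => ENNReal.toReal_nonneg, ?_, ?_⟩
  · filter_upwards [hgMG] with ω hω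
    exact ENNReal.toReal_le_of_le_ofReal (hM ω) (ENNReal.div_le_of_le_mul hω)
  · have hNG : ∀ᵐ ω ∂μ, ‖(g ω / ‖G ω‖ₑ).toReal * G ω‖ₑ = g ω := by
      filter_upwards [hgMG] with ω hω
      have hfin : g ω / ‖G ω‖ₑ ≠ ∞ :=
        ne_top_of_le_ne_top ENNReal.ofReal_ne_top (ENNReal.div_le_of_le_mul hω)
      rw [enorm_mul, Real.enorm_of_nonneg ENNReal.toReal_nonneg, ENNReal.ofReal_toReal hfin]
      by_cases hG0 : ‖G ω‖ₑ = 0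
      · have : g ω = 0 := by simpa [hG0] using hω
        simp [this]
      · exact ENNReal.div_mul_cancel hG0 enorm_ne_top
    rw [eLpNorm_eq_lintegral_rpow_enorm_toReal hp0 hp,
      eLpNorm_eq_lintegral_rpow_enorm_toReal hp0 hp, hint]
    congr 1
    refine lintegral_congr_ae ?_
    filter_upwards [hNG] with ω hω
    simp only [Pi.mul_apply, hω, hgp]

lemma eLpNorm_le_of_abs_le_mul_const_add_abs_add_indicator {f M S : Ω → ℝ} {T : Set Ω} {b : ℝ}
    {p q p₁ : ℝ≥0∞} [ENNReal.HolderTriple q p₁ p] (hp1 : 1 ≤ p) (hp : p ≠ ∞) (hM : 0 ≤ M)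
    (hS : Measurable S) (hT : MeasurableSet T)
    (hf : ∀ᵐ ω ∂μ, |f ω| ≤ M ω * (b + |S ω| + T.indicator 1 ω)) :
    eLpNorm f p μ ≤ eLpNorm M p μ * ‖b‖ₑ + eLpNorm M q μ * eLpNorm S p₁ μ
      + μ T ^ (1 / p₁.toReal) * eLpNorm M q μ := by
  have hI : Measurable (T.indicator (1 : Ω → ℝ)) := measurable_one.indicator hT
  obtain ⟨N, hNm, hN0, hNM, hfN⟩ :=
    exists_measurable_eLpNorm_eq_mul (G := fun ω => b + |S ω| + T.indicator 1 ω) hM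
      ((measurable_const.add hS.abs).add hI) hf (by positivity) hp
  have hNM' (r : ℝ≥0∞) : eLpNorm N r μ ≤ eLpNorm M r μ := by
    refine eLpNorm_mono_ae ?_
    filter_upwards [hNM] with ω hω
    simpa [abs_of_nonneg (hN0 ω), abs_of_nonneg (hM ω)] using hω
  have hsplit : N * (fun ω => b + |S ω| + T.indicator 1 ω) =
      b • N + N • (fun ω => |S ω|) + N • T.indicator 1 := by
    ext ω; simp only [Pi.mul_apply, Pi.add_apply, Pi.smul_apply, smul_eq_mul]; ring
  have hSabs : eLpNorm (fun ω => |S ω|) p₁ μ = eLpNorm S p₁ μ := eLpNorm_norm S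
  have hIT : eLpNorm (T.indicator (1 : Ω → ℝ)) p₁ μ ≤ μ T ^ (1 / p₁.toReal) :=
    (eLpNorm_indicator_const_le (1 : ℝ) p₁).trans_eq (by simp)
  calc eLpNorm f p μ = eLpNorm (b • N + N • (fun ω => |S ω|) + N • T.indicator 1) p μ := by
        rw [hfN, hsplit]
    _ ≤ eLpNorm (b • N) p μ + eLpNorm (N • fun ω => |S ω|) p μ
          + eLpNorm (N • T.indicator 1) p μ :=
        (eLpNorm_add_le (by fun_prop) (by fun_prop) hp1).trans
          (add_le_add_left (eLpNorm_add_le (by fun_prop) (by fun_prop) hp1) _)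
    _ ≤ eLpNorm N p μ * ‖b‖ₑ + eLpNorm N q μ * eLpNorm S p₁ μ
          + μ T ^ (1 / p₁.toReal) * eLpNorm N q μ := by
        rw [eLpNorm_const_smul, mul_comm ‖b‖ₑ, mul_comm (μ T ^ _), ← hSabs]
        gcongr
        · exact eLpNorm_smul_le_mul_eLpNorm (by fun_prop) hNm.aestronglyMeasurable
        · exact (eLpNorm_smul_le_mul_eLpNorm hI.aestronglyMeasurable
            hNm.aestronglyMeasurable).trans (by gcongr)
    _ ≤ _ := by gcongr <;> exact hNM' _

end Holder

lemma ENNReal.holderTriple_ofReal {p p₁ : ℝ} (hp : 0 < p) (hpp₁ : p < p₁) :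
    ENNReal.HolderTriple (ENNReal.ofReal (p * p₁ / (p₁ - p))) (ENNReal.ofReal p₁)
      (ENNReal.ofReal p) := by
  have hp₁ : 0 < p₁ := hp.trans hpp₁
  have hq : 0 < p * p₁ / (p₁ - p) := div_pos (by positivity) (sub_pos.2 hpp₁)
  constructor
  rw [← ENNReal.ofReal_inv_of_pos hq, ← ENNReal.ofReal_inv_of_pos hp₁,
    ← ENNReal.ofReal_inv_of_pos hp, ← ENNReal.ofReal_add (inv_pos.2 hq).le (inv_pos.2 hp₁).le]
  congr 1
  field_simp
  ring

theorem stmt_11_general {Ω : Type*} [MeasurableSpace Ω] (P : Measure Ω) [IsProbabilityMeasure P]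
    (n : ℕ) (γ₂ γ₃ Cc : ℝ)
    (ahat : ℤ)
    (hahat1 : 1 ≤ ahat) (hahatn : ahat ≤ (n : ℤ))
    (c : ℝ)
    (W : ℕ → Ω → ℝ) (hWmeas : ∀ j, Measurable (W j))
    (hWindep : iIndepFun
      (fun j : Fin n => W (j.1 + 1)) P)
    (hWlaw : ∀ j ∈ Finset.Icc 1 n, Measure.map (W j) P = gaussianReal 0 1)
    (U : ℕ → Ω → ℝ)
    (p p₁ : ℝ) (hp : 1 ≤ p) (hpp₁ : p < p₁) :
    eLpNorm (fun ω =>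
        (n : ℝ) ^ γ₃ *
          |(1 / (n : ℝ)) * ∑ j ∈ (Finset.Icc 1 n).filter
              (fun j => rankIn (Finset.Icc 1 n) (fun i => |W i ω|) j ≤ ahat.toNat), U j ω
          - (1 / (n : ℝ)) * ∑ j ∈ (Finset.Icc 1 n).filter
              (fun j => |W j ω| ≤ Real.sqrt c), U j ω|)
        (ENNReal.ofReal p) P
      ≤ ENNReal.ofReal ((n : ℝ) ^ γ₃) *
          eLpNorm (fun ω => ⨆ j ∈ Finset.Icc 1 n, |U j ω|) (ENNReal.ofReal p) P *
          P {ω : Ω | abs (|W 1 ω| - Real.sqrt c) < Cc * (n : ℝ) ^ (-γ₂)}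
        + ENNReal.ofReal ((n : ℝ) ^ γ₃) *
          eLpNorm (fun ω => ⨆ j ∈ Finset.Icc 1 n, |U j ω|)
            (ENNReal.ofReal (p * p₁ / (p₁ - p))) P *
          eLpNorm (fun ω =>
              (1 / (n : ℝ)) * ∑ j ∈ Finset.Icc 1 n,
                ((if abs (|W j ω| - Real.sqrt c) < Cc * (n : ℝ) ^ (-γ₂) then (1 : ℝ) else 0)
                  - (P {ω' : Ω | abs (|W j ω'| - Real.sqrt c)
                        < Cc * (n : ℝ) ^ (-γ₂)}).toReal))
            (ENNReal.ofReal p₁) P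
        + ENNReal.ofReal ((n : ℝ) ^ γ₃) *
          (P ({ω : Ω | abs (orderStatIn (Finset.Icc 1 n) (fun i => |W i ω|) ahat.toNat
              - Real.sqrt c) < Cc * (n : ℝ) ^ (-γ₂)}ᶜ)) ^ (1 / p₁) *
          eLpNorm (fun ω => ⨆ j ∈ Finset.Icc 1 n, |U j ω|)
            (ENNReal.ofReal (p * p₁ / (p₁ - p))) P := by
  classical
  set s := Finset.Icc 1 n
  set ε := Cc * (n : ℝ) ^ (-γ₂)
  set B : ℕ → Set Ω := fun j => {ω | |(|W j ω|) - Real.sqrt c| < ε}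
  set M : Ω → ℝ := fun ω => ⨆ j ∈ s, |U j ω|
  set S : Ω → ℝ := fun ω => 1 / (n : ℝ) * ∑ j ∈ s,
    ((if |(|W j ω|) - Real.sqrt c| < ε then (1 : ℝ) else 0) - (P (B j)).toReal)
  -- `orderStatIn` is built by choice, so `Ω̃_n` need not be measurable: use a measurable hull
  set T := toMeasurable P {ω | |orderStatIn s (fun i => |W i ω|) ahat.toNat - Real.sqrt c| < ε}ᶜ
  have hsn : (#s : ℝ) = n := by simp [s]
  have hn : (0 : ℝ) < n := by exact_mod_cast (show (1 : ℤ) ≤ n by omega)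
  have hr : ahat.toNat ∈ Icc 1 #s := by simp [s]; omega
  have hmeas : MeasurableSet {x : ℝ | |(|x|) - Real.sqrt c| < ε} :=
    measurableSet_lt (by fun_prop) measurable_const
  have hB (j) (hj : j ∈ s) : (P (B j)).toReal = (P (B 1)).toReal :=
    congrArg ENNReal.toReal <| IdentDistrib.measure_mem_eq ⟨(hWmeas j).aemeasurable,
      (hWmeas 1).aemeasurable, (hWlaw j hj).trans (hWlaw 1 (by simp [s]; omega)).symm⟩ hmeas
  have hM0 : 0 ≤ (n : ℝ) ^ γ₃ • M := fun ω =>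
    smul_nonneg (Real.rpow_nonneg hn.le _) (biSup_abs_nonneg s _)
  have hSmeas : Measurable S := .const_mul (measurable_sum _ fun j _ =>
    (Measurable.ite (hWmeas j hmeas) measurable_const measurable_const).sub_const _) _
  have hHolder := ENNReal.holderTriple_ofReal (by linarith : 0 < p) hpp₁
  refine (eLpNorm_le_of_abs_le_mul_const_add_abs_add_indicator
    (q := ENNReal.ofReal (p * p₁ / (p₁ - p))) (p₁ := ENNReal.ofReal p₁) (b := (P (B 1)).toReal)
    (ENNReal.one_le_ofReal.2 hp) ENNReal.ofReal_ne_top hM0 hSmeas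
    (measurableSet_toMeasurable P _ : MeasurableSet T) ?_).trans_eq ?_
  · filter_upwards [ae_injOn_abs_Icc hWmeas hWindep fun j hj =>
      (hWlaw j hj).symm ▸ gaussianReal_absolutelyContinuous 0 one_ne_zero] with ω hinj
    have hbad : (if |orderStatIn s (fun i => |W i ω|) ahat.toNat - Real.sqrt c| < ε
        then 0 else 1 : ℝ) ≤ T.indicator 1 ω := by
      split_ifs with h
      · exact Set.indicator_nonneg (fun _ _ => zero_le_one) _
      · rw [Set.indicator_of_mem (subset_toMeasurable _ _ h)]; rfl
    have key := abs_average_filter_rankIn_sub_average_filter_le hinj hr (Real.sqrt c) ε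
      fun j => U j ω
    rw [card_filter_div_card_eq_add_average_sub (nonempty_of_ne_empty (by simp [s]; omega)) _
      hB, hsn] at key
    rw [abs_of_nonneg (by positivity), Pi.smul_apply, smul_eq_mul, mul_assoc]
    gcongr
    refine key.trans ?_
    gcongr
    · exact biSup_abs_nonneg s _
    · exact le_abs_self _
  · rw [eLpNorm_const_smul, eLpNorm_const_smul, Real.enorm_eq_ofReal (Real.rpow_nonneg hn.le _),
      Real.enorm_eq_ofReal ENNReal.toReal_nonneg, ENNReal.ofReal_toReal (measure_ne_top _ _),
      measure_toMeasurable, ENNReal.toReal_ofReal (by linarith)]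
    ring

/-- Lemma 4.5(ii) (Lemma 2.9 of Inatsugu–Yoshida): three-term `L^p` bound for the
difference of the averages of `U` over the Brownian rank filter `Ĵ_n` and over the
Gaussian-threshold set `J̃_n`. -/
theorem stmt_11 {Ω : Type*} [MeasurableSpace Ω] (P : Measure Ω) [IsProbabilityMeasure P]
    (n : ℕ) (α γ₂ γ₃ Cc : ℝ) (hα : α ∈ Set.Ioo (0 : ℝ) 1) (hγ₂ : 0 < γ₂) (hCc : 0 < Cc)
    (a : ℤ) (ha : a = ⌊(1 - α) * (n : ℝ) - (n : ℝ) ^ (1 - γ₂)⌋)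
    (ahat : ℤ) (hahat : ahat = ⌊(a : ℝ) - (n : ℝ) ^ (1 - γ₂)⌋)
    (hahat1 : 1 ≤ ahat) (hahatn : ahat ≤ (n : ℤ))
    (c : ℝ) (hc : 0 < c)
    (hcα : gaussianReal 0 1 {x : ℝ | x ^ 2 ≤ c} = ENNReal.ofReal (1 - α))
    (W : ℕ → Ω → ℝ) (hWmeas : ∀ j, Measurable (W j))
    (hWindep : iIndepFun
      (fun j : Fin n => W (j.1 + 1)) P)
    (hWlaw : ∀ j ∈ Finset.Icc 1 n, Measure.map (W j) P = gaussianReal 0 1)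
    (U : ℕ → Ω → ℝ)
    (p p₁ : ℝ) (hp : 1 ≤ p) (hpp₁ : p < p₁) :
    eLpNorm (fun ω =>
        (n : ℝ) ^ γ₃ *
          |(1 / (n : ℝ)) * ∑ j ∈ (Finset.Icc 1 n).filter
              (fun j => rankIn (Finset.Icc 1 n) (fun i => |W i ω|) j ≤ ahat.toNat), U j ω
          - (1 / (n : ℝ)) * ∑ j ∈ (Finset.Icc 1 n).filter
              (fun j => |W j ω| ≤ Real.sqrt c), U j ω|)
        (ENNReal.ofReal p) P
      ≤ ENNReal.ofReal ((n : ℝ) ^ γ₃) *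
          eLpNorm (fun ω => ⨆ j ∈ Finset.Icc 1 n, |U j ω|) (ENNReal.ofReal p) P *
          P {ω : Ω | abs (|W 1 ω| - Real.sqrt c) < Cc * (n : ℝ) ^ (-γ₂)}
        + ENNReal.ofReal ((n : ℝ) ^ γ₃) *
          eLpNorm (fun ω => ⨆ j ∈ Finset.Icc 1 n, |U j ω|)
            (ENNReal.ofReal (p * p₁ / (p₁ - p))) P *
          eLpNorm (fun ω =>
              (1 / (n : ℝ)) * ∑ j ∈ Finset.Icc 1 n,
                ((if abs (|W j ω| - Real.sqrt c) < Cc * (n : ℝ) ^ (-γ₂) then (1 : ℝ) else 0)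
                  - (P {ω' : Ω | abs (|W j ω'| - Real.sqrt c)
                        < Cc * (n : ℝ) ^ (-γ₂)}).toReal))
            (ENNReal.ofReal p₁) P
        + ENNReal.ofReal ((n : ℝ) ^ γ₃) *
          (P ({ω : Ω | abs (orderStatIn (Finset.Icc 1 n) (fun i => |W i ω|) ahat.toNat
              - Real.sqrt c) < Cc * (n : ℝ) ^ (-γ₂)}ᶜ)) ^ (1 / p₁) *
          eLpNorm (fun ω => ⨆ j ∈ Finset.Icc 1 n, |U j ω|)
            (ENNReal.ofReal (p * p₁ / (p₁ - p))) P :=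
  stmt_11_general P n γ₂ γ₃ Cc ahat hahat1 hahatn c W hWmeas hWindep hWlaw U p p₁ hp hpp₁
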